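/- Let S = s_1⋯s_m be a string over an alphabet of size n with m ≥ n ≥ 1, and let R = {i : 1 ≤ i ≤ m, s_i ∈ {s_1,…,s_{i−1}}}. Then ∑_{i∈R} log( i / #_{s_i}(s_1⋯s_{i−1}) ) ≤ H·m + (n+1)·log m + 2. -/

import Mathlib

/-- Number of occurrences of the character `a` among `s 1, …, s i`. -/
def cnt {α : Type*} [DecidableEq α] (s : ℕ → α) (a : α) (i : ℕ) : ℕ :=
  ((Finset.Icc 1 i).filter (fun j => s j = a)).card

/-- The set of indices `1 ≤ i ≤ m` such that `s i ∈ {s 1, …, s (i-1)}`,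
i.e. `s i` repeats an earlier character. -/
def repSet {α : Type*} [DecidableEq α] (s : ℕ → α) (m : ℕ) : Finset ℕ :=
  (Finset.Icc 1 m).filter (fun i => s i ∈ (Finset.Icc 1 (i - 1)).image s)

/-- The empirical entropy `H = ∑_{a ∈ S} (#_a(S)/m) · log(m/#_a(S))` of the
string `s 1 ⋯ s m`, with the sum over the distinct characters occurring in it. -/
noncomputable def entropy {α : Type*} [DecidableEq α] (s : ℕ → α) (m : ℕ) : ℝ :=
  ∑ a ∈ (Finset.Icc 1 m).image s,
    ((cnt s a m : ℝ) / (m : ℝ)) * Real.logb 2 ((m : ℝ) / (cnt s a m : ℝ))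

lemma cnt_zero {α : Type*} [DecidableEq α] (s : ℕ → α) (a : α) : cnt s a 0 = 0 := by
  simp [cnt]

lemma cnt_succ {α : Type*} [DecidableEq α] (s : ℕ → α) (a : α) (i : ℕ) :
    cnt s a (i+1) = cnt s a i + (if s (i+1) = a then 1 else 0) := by
  unfold cnt
  rw [show Finset.Icc 1 (i+1) = insert (i+1) (Finset.Icc 1 i) by
      ext x; simp [Finset.mem_Icc]; omega]
  rw [Finset.filter_insert]
  split
  · rw [Finset.card_insert_of_notMem (by simp)]
  · simp

lemma cnt_mono {α : Type*} [DecidableEq α] (s : ℕ → α) (a : α) : Monotone (cnt s a) := by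
  apply monotone_nat_of_le_succ
  intro i
  rw [cnt_succ]
  omega

lemma one_le_cnt_iff {α : Type*} [DecidableEq α] (s : ℕ → α) (a : α) (t : ℕ) :
    1 ≤ cnt s a t ↔ a ∈ (Finset.Icc 1 t).image s := by
  rw [cnt, Nat.one_le_iff_ne_zero, ← Nat.pos_iff_ne_zero, Finset.card_pos,
    Finset.filter_nonempty_iff]
  simp [Finset.mem_image, eq_comm]

lemma mem_repSet {α : Type*} [DecidableEq α] {s : ℕ → α} {m i : ℕ} (h : i ∈ repSet s m) :
    1 ≤ i ∧ i ≤ m ∧ 1 ≤ cnt s (s i) (i - 1) := by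
  rw [repSet, Finset.mem_filter, Finset.mem_Icc] at h
  exact ⟨h.1.1, h.1.2, (one_le_cnt_iff _ _ _).2 h.2⟩

section helperlemmas
open Finset Real


lemma Icc_succ_insert (k : ℕ) : Finset.Icc 1 (k+1) = insert (k+1) (Finset.Icc 1 k) := by
  ext x; simp [Finset.mem_Icc, Finset.mem_insert]; omega

lemma log_ratio_le (k : ℕ) (hk : 1 ≤ k) :
    (k:ℝ) * (Real.log (k+1) - Real.log k) ≤ 1 := by
  have hk0 : (0:ℝ) < k := by exact_mod_cast hk
  have h := Real.log_le_sub_one_of_pos (x := ((k:ℝ)+1)/k) (by positivity)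
  rw [Real.log_div (by positivity) (by positivity)] at h
  have : ((k:ℝ)+1)/k - 1 = 1/k := by field_simp; ring
  rw [this] at h
  calc (k:ℝ) * (Real.log (k+1) - Real.log k) ≤ (k:ℝ) * (1/k) := by
        apply mul_le_mul_of_nonneg_left h (le_of_lt hk0)
    _ = 1 := by field_simp

lemma one_le_log_ratio (k : ℕ) (hk : 1 ≤ k) :
    1 ≤ ((k:ℝ)+1) * (Real.log (k+1) - Real.log k) := by
  have hk0 : (0:ℝ) < k := by exact_mod_cast hk
  have h := Real.log_le_sub_one_of_pos (x := (k:ℝ)/((k:ℝ)+1)) (by positivity)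
  rw [Real.log_div (by positivity) (by positivity)] at h
  have h2 : (k:ℝ)/((k:ℝ)+1) - 1 = -(1/((k:ℝ)+1)) := by field_simp; ring
  rw [h2] at h
  have h3 : 1/((k:ℝ)+1) ≤ Real.log (k+1) - Real.log k := by linarith
  calc (1:ℝ) = ((k:ℝ)+1) * (1/((k:ℝ)+1)) := by field_simp
    _ ≤ ((k:ℝ)+1) * (Real.log (k+1) - Real.log k) := by
        apply mul_le_mul_of_nonneg_left h3 (by positivity)

lemma stirling_low (k : ℕ) (hk : 1 ≤ k) :
    (k:ℝ) * Real.log k - k + 1 ≤ ∑ j ∈ Finset.Icc 1 k, Real.log j := by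
  induction k, hk using Nat.le_induction with
  | base => simp
  | succ k hk ih =>
    rw [Icc_succ_insert, Finset.sum_insert (by simp)]
    have h := log_ratio_le k hk
    push_cast
    push_cast at ih
    nlinarith [h, ih]

lemma stirling_up (k : ℕ) (hk : 1 ≤ k) :
    ∑ j ∈ Finset.Icc 1 k, Real.log j ≤ (k:ℝ) * Real.log k - k + 1 + Real.log k := by
  induction k, hk using Nat.le_induction with
  | base => simp
  | succ k hk ih =>
    rw [Icc_succ_insert, Finset.sum_insert (by simp)]
    have h := one_le_log_ratio k hk
    have hlk : Real.log k ≤ Real.log (k+1) := by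
      apply Real.log_le_log (by exact_mod_cast hk)
      push_cast; linarith
    push_cast
    push_cast at ih
    nlinarith [h, ih, hlk]


section
variable {α : Type*} [DecidableEq α] (s : ℕ → α) (a : α) (m : ℕ)

/-- least index where the count reaches j+1 -/
noncomputable def eidx (j : ℕ) : ℕ := sInf {i | j + 1 ≤ cnt s a i}

lemma eidx_spec {j : ℕ} (hj1 : 1 ≤ j) (hjk : j + 1 ≤ cnt s a m) :
    let i := eidx s a j
    1 ≤ i ∧ i ≤ m ∧ s i = a ∧ cnt s a (i - 1) = j ∧ i ∈ repSet s m := by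
  intro i
  have hne : {i | j + 1 ≤ cnt s a i}.Nonempty := ⟨m, hjk⟩
  have hmem : j + 1 ≤ cnt s a i := Nat.sInf_mem hne
  have hile : i ≤ m := Nat.sInf_le hjk
  have hi1 : 1 ≤ i := by
    rcases Nat.eq_zero_or_pos i with h | h
    · exfalso; rw [h, cnt_zero] at hmem; omega
    · exact h
  have hq : i - 1 < i := by omega
  have hlt0 : i - 1 ∉ {t | j + 1 ≤ cnt s a t} := Nat.notMem_of_lt_sInf hq
  have hlt : ¬ (j + 1 ≤ cnt s a (i - 1)) := hlt0
  have hsucc : cnt s a i = cnt s a (i-1) + (if s i = a then 1 else 0) := by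
    have := cnt_succ s a (i-1)
    rwa [show i - 1 + 1 = i by omega] at this
  have hsa : s i = a := by
    by_contra hne'
    rw [if_neg hne'] at hsucc
    omega
  have hcnt : cnt s a (i-1) = j := by
    rw [if_pos hsa] at hsucc; omega
  refine ⟨hi1, hile, hsa, hcnt, ?_⟩
  rw [repSet, Finset.mem_filter, Finset.mem_Icc]
  exact ⟨⟨hi1, hile⟩, hsa ▸ (one_le_cnt_iff s a (i-1)).1 (by omega)⟩

lemma inj_sum_log (hk : 1 ≤ cnt s a m) :
    ∑ j ∈ Finset.Icc 1 (cnt s a m - 1), Real.log j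
      ≤ ∑ i ∈ (repSet s m).filter (fun i => s i = a),
          Real.log (cnt s (s i) (i - 1)) := by
  set k := cnt s a m with hkdef
  have key : ∀ j ∈ Finset.Icc 1 (k-1), 1 ≤ j ∧ j + 1 ≤ k := by
    intro j hj; rw [Finset.mem_Icc] at hj; omega
  have hmaps : ∀ j ∈ Finset.Icc 1 (k-1),
      eidx s a j ∈ (repSet s m).filter (fun i => s i = a) := by
    intro j hj
    obtain ⟨h1, h2⟩ := key j hj
    obtain ⟨_, _, hsa, _, hrep⟩ := eidx_spec s a m h1 h2
    exact Finset.mem_filter.2 ⟨hrep, hsa⟩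
  have hval : ∀ j ∈ Finset.Icc 1 (k-1),
      Real.log (cnt s (s (eidx s a j)) (eidx s a j - 1)) = Real.log j := by
    intro j hj
    obtain ⟨h1, h2⟩ := key j hj
    obtain ⟨_, _, hsa, hcnt, _⟩ := eidx_spec s a m h1 h2
    rw [hsa, hcnt]
  have hinj : Set.InjOn (eidx s a) (Finset.Icc 1 (k-1)) := by
    intro j hj j' hj' he
    obtain ⟨h1, h2⟩ := key j hj
    obtain ⟨h1', h2'⟩ := key j' hj'
    obtain ⟨_, _, _, hcnt, _⟩ := eidx_spec s a m h1 h2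
    obtain ⟨_, _, _, hcnt', _⟩ := eidx_spec s a m h1' h2'
    rw [← hcnt, ← hcnt', he]
  calc ∑ j ∈ Finset.Icc 1 (k-1), Real.log j
      = ∑ j ∈ Finset.Icc 1 (k-1),
          Real.log (cnt s (s (eidx s a j)) (eidx s a j - 1)) :=
        (Finset.sum_congr rfl hval).symm
    _ = ∑ i ∈ (Finset.Icc 1 (k-1)).image (eidx s a),
          Real.log (cnt s (s i) (i - 1)) := (Finset.sum_image (f := fun i => Real.log (cnt s (s i) (i - 1))) (fun x hx y hy h => hinj hx hy h)).symm
    _ ≤ ∑ i ∈ (repSet s m).filter (fun i => s i = a),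
          Real.log (cnt s (s i) (i - 1)) := by
        apply Finset.sum_le_sum_of_subset_of_nonneg
        · intro i hi
          obtain ⟨j, hj, rfl⟩ := Finset.mem_image.1 hi
          exact hmaps j hj
        · intro i hi _
          have : 1 ≤ cnt s (s i) (i-1) := by
            have := (Finset.mem_filter.1 hi).1
            rw [repSet, Finset.mem_filter] at this
            exact (one_le_cnt_iff s (s i) (i-1)).2 this.2
          apply Real.log_nonneg
          exact_mod_cast this

end
end helperlemmas

theorem stmt_1 (n m : ℕ) (hn : 1 ≤ n) (hm : n ≤ m) (s : ℕ → Fin n) :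
    ∑ i ∈ repSet s m,
        Real.logb 2 ((i : ℝ) / (cnt s (s i) (i - 1) : ℝ))
      ≤ entropy s m * m + ((n : ℝ) + 1) * Real.logb 2 (m : ℝ) + 2 := by
  have hm1 : 1 ≤ m := le_trans hn hm
  have hm0 : (0:ℝ) < m := by exact_mod_cast hm1
  set A := (Finset.Icc 1 m).image s with hA
  set R := repSet s m with hR
  -- basic facts about members of R
  have hRmem : ∀ i ∈ R, 1 ≤ i ∧ i ≤ m ∧ 1 ≤ cnt s (s i) (i - 1) := by
    intro i hi
    rw [hR, repSet, Finset.mem_filter, Finset.mem_Icc] at hi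
    exact ⟨hi.1.1, hi.1.2, (one_le_cnt_iff _ _ _).2 hi.2⟩
  have hRsub : R ⊆ Finset.Icc 1 m := by
    intro i hi; rw [Finset.mem_Icc]; exact ⟨(hRmem i hi).1, (hRmem i hi).2.1⟩
  have hmapsR : ∀ i ∈ R, s i ∈ A := by
    intro i hi; rw [hA]; exact Finset.mem_image_of_mem s (hRsub hi)
  -- counts for a ∈ A
  have hka : ∀ a ∈ A, 1 ≤ cnt s a m := by
    intro a ha; exact (one_le_cnt_iff s a m).2 ha
  have hkam : ∀ a ∈ A, cnt s a m ≤ m := by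
    intro a ha
    calc cnt s a m ≤ (Finset.Icc 1 m).card := Finset.card_filter_le _ _
      _ = m := by rw [Nat.card_Icc]; omega
  -- total count equals m
  have hcard : ∑ a ∈ A, (cnt s a m : ℝ) = (m : ℝ) := by
    have := Finset.card_eq_sum_card_fiberwise
      (f := s) (s := Finset.Icc 1 m) (t := A)
      (fun i hi => Finset.mem_image_of_mem s hi)
    have h2 : (Finset.Icc 1 m).card = m := by rw [Nat.card_Icc]; omega
    rw [h2] at this
    have hnat : ∑ a ∈ A, cnt s a m = m := by unfold cnt; exact this.symm
    exact_mod_cast hnat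
  -- log 2 positive
  have hlog2 : (0:ℝ) < Real.log 2 := Real.log_pos (by norm_num)
  have hlogm : (0:ℝ) ≤ Real.log m := Real.log_nonneg (by exact_mod_cast hm1)
  -- abbreviations
  set K := ∑ a ∈ A, (cnt s a m : ℝ) * Real.log (cnt s a m) with hK
  set LG := ∑ a ∈ A, Real.log (cnt s a m) with hLG
  set d := A.card with hd
  have hd1 : 1 ≤ d := by
    rw [hd, hA]
    have : (1:ℕ) ∈ Finset.Icc 1 m := by rw [Finset.mem_Icc]; omega
    exact Finset.card_pos.2 ⟨s 1, Finset.mem_image_of_mem s this⟩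
  have hdn : d ≤ n := by
    rw [hd]
    calc A.card ≤ (Finset.univ : Finset (Fin n)).card := Finset.card_le_univ A
      _ = n := by simp
  -- entropy identity
  have hE : entropy s m * m * Real.log 2 = (m:ℝ) * Real.log m - K := by
    rw [entropy, ← hA, Finset.sum_mul, Finset.sum_mul]
    rw [show (m:ℝ) * Real.log m = (∑ a ∈ A, (cnt s a m : ℝ)) * Real.log m from by rw [hcard]]
    rw [hK, Finset.sum_mul, ← Finset.sum_sub_distrib]
    apply Finset.sum_congr rfl
    intro a ha
    have hc1 : (1:ℝ) ≤ (cnt s a m : ℝ) := by exact_mod_cast hka a ha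
    have hc0 : (0:ℝ) < (cnt s a m : ℝ) := by linarith
    rw [Real.logb, Real.log_div (ne_of_gt hm0) (ne_of_gt hc0)]
    field_simp
  -- the natural-log key inequality
  have key : ∑ i ∈ R, (Real.log i - Real.log (cnt s (s i) (i - 1)))
      ≤ entropy s m * m * Real.log 2 + ((n:ℝ)+1) * Real.log m + 2 * Real.log 2 := by
    rw [Finset.sum_sub_distrib]
    -- upper bound on ∑ log i
    have h1 : ∑ i ∈ R, Real.log i ≤ (m:ℝ) * Real.log m - m + 1 + Real.log m := by
      calc ∑ i ∈ R, Real.log i ≤ ∑ i ∈ Finset.Icc 1 m, Real.log i := by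
            apply Finset.sum_le_sum_of_subset_of_nonneg hRsub
            intro i hi _
            apply Real.log_nonneg
            rw [Finset.mem_Icc] at hi
            exact_mod_cast hi.1
        _ ≤ (m:ℝ) * Real.log m - m + 1 + Real.log m := stirling_up m hm1
    -- lower bound on ∑ log c_i
    have h2 : K - (m:ℝ) + d - LG ≤ ∑ i ∈ R, Real.log (cnt s (s i) (i - 1)) := by
      rw [← Finset.sum_fiberwise_of_maps_to hmapsR
        (fun i => Real.log (cnt s (s i) (i - 1)))]
      have hper : ∀ a ∈ A,
          (cnt s a m : ℝ) * Real.log (cnt s a m) - (cnt s a m : ℝ) + 1 - Real.log (cnt s a m)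
            ≤ ∑ i ∈ R.filter (fun i => s i = a), Real.log (cnt s (s i) (i - 1)) := by
        intro a ha
        have hk1 := hka a ha
        have hlow : (cnt s a m : ℝ) * Real.log (cnt s a m) - (cnt s a m : ℝ) + 1
              - Real.log (cnt s a m)
            ≤ ∑ j ∈ Finset.Icc 1 (cnt s a m - 1), Real.log j := by
          have := stirling_low (cnt s a m) hk1
          have hins : Finset.Icc 1 (cnt s a m) =
              insert (cnt s a m) (Finset.Icc 1 (cnt s a m - 1)) := by
            have h := Icc_succ_insert (cnt s a m - 1)
            rwa [show cnt s a m - 1 + 1 = cnt s a m by omega] at h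
          rw [hins, Finset.sum_insert (by rw [Finset.mem_Icc]; omega)] at this
          linarith
        exact le_trans hlow (inj_sum_log s a m hk1)
      calc K - (m:ℝ) + d - LG
          = ∑ a ∈ A, ((cnt s a m : ℝ) * Real.log (cnt s a m) - (cnt s a m : ℝ) + 1
              - Real.log (cnt s a m)) := by
            rw [hK, hLG]
            rw [Finset.sum_sub_distrib, Finset.sum_add_distrib, Finset.sum_sub_distrib,
              Finset.sum_const, hcard]
            rw [hd]
            push_cast
            ring
        _ ≤ _ := Finset.sum_le_sum hper
    -- LG ≤ n log m
    have h3 : LG ≤ (n:ℝ) * Real.log m := by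
      calc LG ≤ ∑ _a ∈ A, Real.log m := by
            apply Finset.sum_le_sum
            intro a ha
            apply Real.log_le_log (by exact_mod_cast hka a ha)
            exact_mod_cast hkam a ha
        _ = (d:ℝ) * Real.log m := by rw [Finset.sum_const, hd]; simp [mul_comm]
        _ ≤ (n:ℝ) * Real.log m := by
            apply mul_le_mul_of_nonneg_right _ hlogm
            exact_mod_cast hdn
    have hd1' : (1:ℝ) ≤ (d:ℝ) := by exact_mod_cast hd1
    rw [hE]
    linarith
  -- convert to logb
  have hlhs : ∑ i ∈ R, Real.logb 2 ((i : ℝ) / (cnt s (s i) (i - 1) : ℝ))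
      = (∑ i ∈ R, (Real.log i - Real.log (cnt s (s i) (i - 1)))) / Real.log 2 := by
    rw [Finset.sum_div]
    apply Finset.sum_congr rfl
    intro i hi
    obtain ⟨hi1, _, hc1⟩ := hRmem i hi
    have hi0 : (0:ℝ) < (i:ℝ) := by exact_mod_cast hi1
    have hc0 : (0:ℝ) < (cnt s (s i) (i-1) : ℝ) := by exact_mod_cast hc1
    rw [Real.logb, Real.log_div (ne_of_gt hi0) (ne_of_gt hc0)]
  rw [hlhs]
  rw [div_le_iff₀ hlog2]
  calc ∑ i ∈ R, (Real.log i - Real.log (cnt s (s i) (i - 1)))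
      ≤ entropy s m * m * Real.log 2 + ((n:ℝ)+1) * Real.log m + 2 * Real.log 2 := key
    _ = (entropy s m * m + ((n:ℝ)+1) * Real.logb 2 m + 2) * Real.log 2 := by
        rw [Real.logb]
        field_simp
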